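/- Let f ∈ ℂ[x,y] be a homogeneous polynomial of degree d > 1. Then the Jacobian ideal J_f coincides, as a ℂ-linear subspace of ℂ[x,y], with D_f + f·ℂ[x,y]; that is, every element of J_f can be written as (f_x·∂g/∂y − f_y·∂g/∂x) + f·h for some g, h ∈ ℂ[x,y], and conversely every such element lies in J_f. -/

import Mathlib

/-!
Euler's identity `x f_x + y f_y = d f` puts `f` into `J_f` once `d ≠ 0`, and `f_x g_y - f_y g_x`
lies in `J_f` by its shape. Conversely, if `u` is homogeneous of degree `m`, Euler's identities
for `f` and for `u` give `(m + 1) u f_x = (f_x (y u)_y - f_y (y u)_x) + d f u_x`, and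
symmetrically with `-x v` in place of `y u` for `v f_y`; dividing by `m + 1` and summing over homogeneous components puts `J_f` inside `D_f + f·R`.
-/

namespace MvPolynomial

theorem mul_mem_of_forall_isHomogeneous {σ R : Type*} [CommSemiring R]
    {S : Submodule R (MvPolynomial σ R)} {p : MvPolynomial σ R}
    (h : ∀ (m : ℕ) (u : MvPolynomial σ R), u.IsHomogeneous m → u * p ∈ S)
    (u : MvPolynomial σ R) : u * p ∈ S := by
  rw [← u.sum_homogeneousComponent, Finset.sum_mul]
  exact Submodule.sum_mem _ fun m _ => h m _ (homogeneousComponent_isHomogeneous m u)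

theorem IsHomogeneous.X_zero_mul_pderiv_add {R : Type*} [CommSemiring R] {m : ℕ}
    {p : MvPolynomial (Fin 2) R} (hp : p.IsHomogeneous m) :
    X 0 * pderiv 0 p + X 1 * pderiv 1 p = (m : MvPolynomial (Fin 2) R) * p := by
  simpa [Fin.sum_univ_two, nsmul_eq_mul] using hp.sum_X_mul_pderiv

section CommRing

variable {R : Type*} [CommRing R]

/-- The Poisson bracket `{f, g} = f_x g_y - f_y g_x`; its range is the space `D_f`. -/
noncomputable def poissonBracket (f : MvPolynomial (Fin 2) R) :
    MvPolynomial (Fin 2) R →ₗ[R] MvPolynomial (Fin 2) R :=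
  LinearMap.mulLeft R (pderiv 0 f) ∘ₗ (pderiv 1).toLinearMap -
    LinearMap.mulLeft R (pderiv 1 f) ∘ₗ (pderiv 0).toLinearMap

@[simp]
theorem poissonBracket_apply (f g : MvPolynomial (Fin 2) R) :
    poissonBracket f g = pderiv 0 f * pderiv 1 g - pderiv 1 f * pderiv 0 g :=
  rfl

theorem poissonBracket_mem_span_pderiv (f g : MvPolynomial (Fin 2) R) :
    poissonBracket f g ∈ Ideal.span {pderiv 0 f, pderiv 1 f} :=
  Ideal.mem_span_pair.mpr ⟨pderiv 1 g, -pderiv 0 g, by rw [poissonBracket_apply]; ring⟩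

theorem IsHomogeneous.mul_pderiv_zero_eq {f u : MvPolynomial (Fin 2) R} {d m : ℕ}
    (hf : f.IsHomogeneous d) (hu : u.IsHomogeneous m) :
    ((m : MvPolynomial (Fin 2) R) + 1) * (u * pderiv 0 f) =
      poissonBracket f (X 1 * u) + f * (d * pderiv 0 u) := by
  simp only [poissonBracket_apply, Derivation.leibniz, smul_eq_mul, pderiv_X_self,
    pderiv_X_of_ne one_ne_zero]
  linear_combination pderiv 0 u * hf.X_zero_mul_pderiv_add - pderiv 0 f * hu.X_zero_mul_pderiv_add

theorem IsHomogeneous.mul_pderiv_one_eq {f v : MvPolynomial (Fin 2) R} {d m : ℕ}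
    (hf : f.IsHomogeneous d) (hv : v.IsHomogeneous m) :
    ((m : MvPolynomial (Fin 2) R) + 1) * (v * pderiv 1 f) =
      poissonBracket f (-(X 0 * v)) + f * (d * pderiv 1 v) := by
  simp only [poissonBracket_apply, map_neg, Derivation.leibniz, smul_eq_mul, pderiv_X_self,
    pderiv_X_of_ne zero_ne_one]
  linear_combination pderiv 1 v * hf.X_zero_mul_pderiv_add - pderiv 1 f * hv.X_zero_mul_pderiv_add

end CommRing

section Field

variable {K : Type*} [Field K]

theorem IsHomogeneous.mem_span_pderiv {f : MvPolynomial (Fin 2) K} {d : ℕ}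
    (hf : f.IsHomogeneous d) (hd : (d : K) ≠ 0) : f ∈ Ideal.span {pderiv 0 f, pderiv 1 f} := by
  refine Ideal.mem_span_pair.mpr ⟨C (d : K)⁻¹ * X 0, C (d : K)⁻¹ * X 1, ?_⟩
  have hd' : C (d : K)⁻¹ * (d : MvPolynomial (Fin 2) K) = 1 := by
    rw [← C_eq_coe_nat, ← map_mul, inv_mul_cancel₀ hd, C_1]
  linear_combination C (d : K)⁻¹ * hf.X_zero_mul_pderiv_add + f * hd'

variable [CharZero K] {f : MvPolynomial (Fin 2) K} {d : ℕ}

theorem IsHomogeneous.mul_pderiv_zero_mem (hf : f.IsHomogeneous d) (u : MvPolynomial (Fin 2) K) :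
    u * pderiv 0 f ∈
      LinearMap.range (poissonBracket f) ⊔ LinearMap.range (LinearMap.mulLeft K f) := by
  refine mul_mem_of_forall_isHomogeneous (fun m u hu => ?_) u
  rw [← Submodule.smul_mem_iff _ (Nat.cast_add_one_ne_zero m : (m : K) + 1 ≠ 0), smul_eq_C_mul,
    map_add, map_natCast, map_one, hf.mul_pderiv_zero_eq hu]
  exact Submodule.add_mem_sup ⟨_, rfl⟩ ⟨_, rfl⟩

theorem IsHomogeneous.mul_pderiv_one_mem (hf : f.IsHomogeneous d) (v : MvPolynomial (Fin 2) K) :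
    v * pderiv 1 f ∈
      LinearMap.range (poissonBracket f) ⊔ LinearMap.range (LinearMap.mulLeft K f) := by
  refine mul_mem_of_forall_isHomogeneous (fun m v hv => ?_) v
  rw [← Submodule.smul_mem_iff _ (Nat.cast_add_one_ne_zero m : (m : K) + 1 ≠ 0), smul_eq_C_mul,
    map_add, map_natCast, map_one, hf.mul_pderiv_one_eq hv]
  exact Submodule.add_mem_sup ⟨_, rfl⟩ ⟨_, rfl⟩

theorem IsHomogeneous.restrictScalars_span_pderiv_eq (hf : f.IsHomogeneous d) (hd : d ≠ 0) :
    (Ideal.span {pderiv 0 f, pderiv 1 f}).restrictScalars K =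
      LinearMap.range (poissonBracket f) ⊔ LinearMap.range (LinearMap.mulLeft K f) := by
  apply le_antisymm
  · intro w hw
    obtain ⟨u, v, rfl⟩ := Ideal.mem_span_pair.mp hw
    exact add_mem (hf.mul_pderiv_zero_mem u) (hf.mul_pderiv_one_mem v)
  · refine sup_le ?_ ?_
    · rintro _ ⟨g, rfl⟩
      exact poissonBracket_mem_span_pderiv f g
    · rintro _ ⟨h, rfl⟩
      exact Ideal.mul_mem_right h _ (hf.mem_span_pderiv (Nat.cast_ne_zero.mpr hd))

end Field

end MvPolynomial

open MvPolynomial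

theorem statement0 (f : MvPolynomial (Fin 2) ℂ) (d : ℕ) (hd : 1 < d)
    (hf : f.IsHomogeneous d) (w : MvPolynomial (Fin 2) ℂ) :
    w ∈ Ideal.span ({pderiv 0 f, pderiv 1 f} : Set (MvPolynomial (Fin 2) ℂ)) ↔
      ∃ g h : MvPolynomial (Fin 2) ℂ,
        w = (pderiv 0 f * pderiv 1 g - pderiv 1 f * pderiv 0 g) + f * h := by
  rw [← Submodule.restrictScalars_mem ℂ, hf.restrictScalars_span_pderiv_eq (by omega),
    Submodule.mem_sup]
  constructor
  · rintro ⟨_, ⟨g, rfl⟩, _, ⟨h, rfl⟩, rfl⟩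
    exact ⟨g, h, rfl⟩
  · rintro ⟨g, h, rfl⟩
    exact ⟨_, ⟨g, rfl⟩, _, ⟨h, rfl⟩, rfl⟩
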